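/- arXiv:2408.09625 — 4 statements merged into one kernel-verified Lean document; each statement's English description precedes it below -/
import Mathlib

section
/- (Lemma 2.1) Let φ be a holomorphic ℂ*-action on ℂⁿ having p ∈ ℂⁿ as a fixed point, and let ψ_p be the linearized action of φ at p. Then there exists a holomorphic map F_p : ℂⁿ → ℂⁿ such that (i) ψ_p^z ∘ F_p = F_p ∘ φ^z for every z ∈ ℂ*, and (ii) F_p(p) = 0 and the derivative DF_p(p) is the identity map of ℂⁿ. -/
/-!
Pass to the additive flow `ψ^s = φ^{exp s}`, which is jointly holomorphic on `ℂ × ℂⁿ` and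
`2πi`-periodic. Averaging `(Dψ^{-iθ}_p) ∘ (ψ^{iθ} - p)` over `θ ∈ [0, 2π]` gives a holomorphic map
`F` with `F p = 0` whose derivative at `p` is an average of identities, and which intertwines
`ψ^{it}` with its linearization because the average is invariant under rotation. Both sides of
`Dψ^s_p (F x) = F (ψ^s x)` are entire in `s` (for the left side: by Cauchy's formula, the partial
derivative of a jointly holomorphic map depends holomorphically on the parameter), so the identity
extends from the imaginary axis to all of `ℂ`.
-/
open Complex Metric Set Filter Topology Function
open scoped Real

section Uncurry

variable {𝕜 G E F : Type*} [NontriviallyNormedField 𝕜] [NormedAddCommGroup G] [NormedSpace 𝕜 G]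
  [NormedAddCommGroup E] [NormedSpace 𝕜 E] [NormedAddCommGroup F] [NormedSpace 𝕜 F]
  {f : G → E → F}

theorem Differentiable.uncurry_left (s : G) (hf : Differentiable 𝕜 (uncurry f)) :
    Differentiable 𝕜 (f s) :=
  hf.comp ((differentiable_const s).prodMk differentiable_id)

theorem Differentiable.uncurry_right (x : E) (hf : Differentiable 𝕜 (uncurry f)) :
    Differentiable 𝕜 fun s ↦ f s x :=
  hf.comp (differentiable_id.prodMk (differentiable_const x))

end Uncurry

section ParametricHolomorphy

open Real

variable {E F : Type*} [NormedAddCommGroup E] [NormedSpace ℂ E] [NormedAddCommGroup F]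
  [NormedSpace ℂ F]

theorem continuous_circleMap_inv_smul_line {X : Type*} [TopologicalSpace X] {g : X → E → F}
    (hg : Continuous (uncurry g)) (v : E) :
    Continuous fun q : (X × E) × ℝ ↦
      (circleMap 0 1 q.2)⁻¹ • g q.1.1 (q.1.2 + circleMap 0 1 q.2 • v) := by
  have hinv : Continuous fun θ ↦ (circleMap 0 1 θ)⁻¹ :=
    (continuous_circleMap 0 1).inv₀ fun _ ↦ circleMap_ne_center one_ne_zero
  exact (hinv.comp continuous_snd).smul (hg.comp (continuous_fst.fst.prodMk
    (continuous_fst.snd.add (((continuous_circleMap 0 1).comp continuous_snd).smul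
      continuous_const))))

variable [CompleteSpace F]

theorem deriv_zero_eq_circleAverage {h : ℂ → F} (hh : Differentiable ℂ h) :
    deriv h 0 = circleAverage (fun z ↦ z⁻¹ • h z) 0 1 := by
  have hcauchy := (hh.diffContOnCl (s := ball 0 1)).deriv_eq_smul_circleIntegral one_pos
  rw [circleAverage_eq_circleIntegral one_ne_zero]
  simp only [sub_zero, one_div, smul_smul, ← inv_pow, ← sq] at hcauchy ⊢
  rw [hcauchy, smul_smul, inv_mul_cancel₀ two_pi_I_ne_zero, one_smul]

theorem fderiv_apply_eq_circleAverage {f : E → F} (hf : Differentiable ℂ f) (x v : E) :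
    fderiv ℂ f x v = circleAverage (fun z ↦ z⁻¹ • f (x + z • v)) 0 1 := by
  rw [← (hf x).lineDeriv_eq_fderiv, lineDeriv]
  exact deriv_zero_eq_circleAverage (hf.comp ((differentiable_id.smul_const v).const_add x))

theorem continuous_fderiv_apply_of_continuous_uncurry {X : Type*} [TopologicalSpace X]
    {g : X → E → F} (hcont : Continuous (uncurry g)) (hdiff : ∀ a, Differentiable ℂ (g a))
    (v : E) : Continuous fun q : X × E ↦ fderiv ℂ (g q.1) q.2 v := by
  simp_rw [fderiv_apply_eq_circleAverage (hdiff _), circleAverage_def]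
  exact continuous_const.smul
    (intervalIntegral.continuous_parametric_intervalIntegral_of_continuous'
      (continuous_circleMap_inv_smul_line hcont v) _ _)

theorem continuous_fderiv_of_continuous_uncurry [FiniteDimensional ℂ E] {X : Type*}
    [TopologicalSpace X] {g : X → E → F} (hcont : Continuous (uncurry g))
    (hdiff : ∀ a, Differentiable ℂ (g a)) :
    Continuous fun q : X × E ↦ fderiv ℂ (g q.1) q.2 :=
  continuous_clm_apply.2 (continuous_fderiv_apply_of_continuous_uncurry hcont hdiff)

theorem hasFDerivAt_intervalIntegral_of_continuous_uncurry [FiniteDimensional ℂ E]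
    {g : E → ℝ → F} (hcont : Continuous (uncurry g)) (hdiff : ∀ θ, Differentiable ℂ (g · θ))
    (a b : ℝ) (x₀ : E) :
    HasFDerivAt (fun x ↦ ∫ θ in a..b, g x θ) (∫ θ in a..b, fderiv ℂ (g · θ) x₀) x₀ := by
  have hderiv := continuous_fderiv_of_continuous_uncurry (g := fun θ x ↦ g x θ)
    (hcont.comp continuous_swap) hdiff
  obtain ⟨C, hC⟩ := (isCompact_uIcc.prod (isCompact_closedBall x₀ 1)).exists_bound_of_continuousOn
    hderiv.continuousOn
  have hslice (x : E) : Continuous (g x) := hcont.uncurry_left x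
  refine intervalIntegral.hasFDerivAt_integral_of_dominated_of_fderiv_le (F := g)
    (bound := fun _ ↦ C) (ball_mem_nhds x₀ one_pos)
    (.of_forall fun x ↦ (hslice x).aestronglyMeasurable) ((hslice x₀).intervalIntegrable _ _)
    (hderiv.comp (continuous_id.prodMk continuous_const)).aestronglyMeasurable ?_
    intervalIntegrable_const (.of_forall fun θ _ x _ ↦ (hdiff θ x).hasFDerivAt)
  exact .of_forall fun θ hθ x hx ↦ hC (θ, x) ⟨uIoc_subset_uIcc hθ, ball_subset_closedBall hx⟩

theorem Differentiable.intervalIntegral_of_continuous_uncurry [FiniteDimensional ℂ E]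
    {g : E → ℝ → F} (hcont : Continuous (uncurry g)) (hdiff : ∀ θ, Differentiable ℂ (g · θ))
    (a b : ℝ) : Differentiable ℂ fun x ↦ ∫ θ in a..b, g x θ := fun x₀ ↦
  (hasFDerivAt_intervalIntegral_of_continuous_uncurry hcont hdiff a b x₀).differentiableAt

theorem differentiable_fderiv_apply_of_differentiable_uncurry {f : ℂ → E → F}
    (hf : Differentiable ℂ (uncurry f)) (x v : E) :
    Differentiable ℂ fun s ↦ fderiv ℂ (f s) x v := by
  simp_rw [fderiv_apply_eq_circleAverage (hf.uncurry_left _), circleAverage_def]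
  refine Differentiable.const_smul
    (Differentiable.intervalIntegral_of_continuous_uncurry ?_ (fun θ ↦ ?_) _ _) _
  · exact (continuous_circleMap_inv_smul_line hf.continuous v).comp
      (f := fun q : ℂ × ℝ ↦ ((q.1, x), q.2)) (by fun_prop)
  · exact ((hf.uncurry_right _).const_smul _)

end ParametricHolomorphy

theorem frequently_nhdsNE_zero_of_forall_ofReal_mul_I {P : ℂ → Prop} (h : ∀ t : ℝ, P (t * I)) :
    ∃ᶠ s in 𝓝[≠] 0, P s := by
  have hcont : Tendsto (fun t : ℝ ↦ (t : ℂ) * I) (𝓝 0) (𝓝 0) :=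
    (by fun_prop : Continuous fun t : ℝ ↦ (t : ℂ) * I).tendsto' 0 0 (by simp)
  have hne : Tendsto (fun t : ℝ ↦ (t : ℂ) * I) (𝓝[≠] 0) (𝓝[≠] 0) :=
    tendsto_nhdsWithin_of_tendsto_nhds_of_eventually_within _
      (hcont.mono_left nhdsWithin_le_nhds)
      (eventually_nhdsWithin_of_forall fun t ht ↦ by simpa using ht)
  exact hne.frequently (.of_forall h)

namespace HolomorphicFlow

variable {E : Type*} [NormedAddCommGroup E] [NormedSpace ℂ E] {ψ : ℂ → E → E} {p : E}

noncomputable def bochnerIntegrand (ψ : ℂ → E → E) (p x : E) (θ : ℝ) : E :=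
  fderiv ℂ (ψ (-θ * I)) p (ψ (θ * I) x - p)

/-- For `ψ^s = φ^{exp s}` this is the average of `(D φ^u_p)⁻¹ ∘ (φ^u - p)` over the unit circle
`u = exp (i θ)` of `ℂ*`. -/
noncomputable def bochnerMap (ψ : ℂ → E → E) (p x : E) : E :=
  (2 * π)⁻¹ • ∫ θ in 0..2 * π, bochnerIntegrand ψ p x θ

theorem fderiv_add (hψ : Differentiable ℂ (uncurry ψ))
    (hadd : ∀ s t, ψ (s + t) = ψ s ∘ ψ t) (hp : ∀ s, ψ s p = p) (s t : ℂ) :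
    fderiv ℂ (ψ (s + t)) p = (fderiv ℂ (ψ s) p).comp (fderiv ℂ (ψ t) p) := by
  rw [hadd, fderiv_comp p (hψ.uncurry_left s _) (hψ.uncurry_left t p), hp]

theorem bochnerMap_self (hp : ∀ s, ψ s p = p) : bochnerMap ψ p p = 0 := by
  simp [bochnerMap, bochnerIntegrand, hp]

theorem differentiable_bochnerIntegrand (hψ : Differentiable ℂ (uncurry ψ)) (p : E) (θ : ℝ) :
    Differentiable ℂ (bochnerIntegrand ψ p · θ) :=
  (fderiv ℂ (ψ (-θ * I)) p).differentiable.comp ((hψ.uncurry_left _).sub_const p)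

theorem fderiv_bochnerIntegrand_self (hψ : Differentiable ℂ (uncurry ψ))
    (hadd : ∀ s t, ψ (s + t) = ψ s ∘ ψ t) (hzero : ψ 0 = id) (hp : ∀ s, ψ s p = p) (θ : ℝ) :
    fderiv ℂ (bochnerIntegrand ψ p · θ) p = ContinuousLinearMap.id ℂ E := by
  have hchain : HasFDerivAt (bochnerIntegrand ψ p · θ)
      ((fderiv ℂ (ψ (-θ * I)) p).comp (fderiv ℂ (ψ (θ * I)) p)) p :=
    (fderiv ℂ (ψ (-θ * I)) p).hasFDerivAt.comp p ((hψ.uncurry_left _ p).hasFDerivAt.sub_const p)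
  rw [hchain.fderiv, ← fderiv_add hψ hadd hp, neg_mul, neg_add_cancel, hzero, fderiv_id]

theorem bochnerIntegrand_periodic (hadd : ∀ s t, ψ (s + t) = ψ s ∘ ψ t)
    (hper : ψ (2 * π * I) = id) (p x : E) : Periodic (bochnerIntegrand ψ p x) (2 * π) := by
  have hψper : Periodic ψ (2 * π * I) := fun s ↦ by rw [hadd, hper, comp_id]
  intro θ
  have h₁ : ((θ + 2 * π : ℝ) : ℂ) * I = θ * I + 2 * π * I := by push_cast; ring
  have h₂ : -((θ + 2 * π : ℝ) : ℂ) * I = -θ * I - 2 * π * I := by push_cast; ring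
  simp only [bochnerIntegrand, h₁, h₂, hψper (θ * I), hψper.sub_eq]

theorem fderiv_apply_bochnerIntegrand (hψ : Differentiable ℂ (uncurry ψ))
    (hadd : ∀ s t, ψ (s + t) = ψ s ∘ ψ t) (hp : ∀ s, ψ s p = p) (t θ : ℝ) (x : E) :
    fderiv ℂ (ψ (t * I)) p (bochnerIntegrand ψ p x θ) =
      bochnerIntegrand ψ p (ψ (t * I) x) (θ - t) := by
  have h₁ : (t : ℂ) * I + -θ * I = -((θ - t : ℝ) : ℂ) * I := by push_cast; ring
  have h₂ : ((θ - t : ℝ) : ℂ) * I + t * I = θ * I := by push_cast; ring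
  rw [bochnerIntegrand, bochnerIntegrand, ← ContinuousLinearMap.comp_apply,
    ← fderiv_add hψ hadd hp, ← comp_apply (f := ψ _), ← hadd, h₁, h₂]

variable [FiniteDimensional ℂ E]

theorem continuous_bochnerIntegrand (hψ : Differentiable ℂ (uncurry ψ)) (p : E) :
    Continuous (uncurry (bochnerIntegrand ψ p)) := by
  have hlin : Continuous fun θ : ℝ ↦ fderiv ℂ (ψ (-θ * I)) p :=
    (continuous_fderiv_of_continuous_uncurry hψ.continuous hψ.uncurry_left).comp
      (f := fun θ : ℝ ↦ (-θ * I, p)) (by fun_prop)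
  exact (hlin.comp continuous_snd).clm_apply
    ((hψ.continuous.comp (f := fun q : E × ℝ ↦ (q.2 * I, q.1)) (by fun_prop)).sub
      continuous_const)

theorem differentiable_bochnerMap (hψ : Differentiable ℂ (uncurry ψ)) :
    Differentiable ℂ (bochnerMap ψ p) :=
  (Differentiable.intervalIntegral_of_continuous_uncurry (continuous_bochnerIntegrand hψ p)
    (differentiable_bochnerIntegrand hψ p) _ _).const_smul _

theorem hasFDerivAt_bochnerMap_self (hψ : Differentiable ℂ (uncurry ψ))
    (hadd : ∀ s t, ψ (s + t) = ψ s ∘ ψ t) (hzero : ψ 0 = id) (hp : ∀ s, ψ s p = p) :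
    HasFDerivAt (bochnerMap ψ p) (ContinuousLinearMap.id ℂ E) p := by
  have h := (hasFDerivAt_intervalIntegral_of_continuous_uncurry (continuous_bochnerIntegrand hψ p)
    (differentiable_bochnerIntegrand hψ p) 0 (2 * π) p).const_smul (2 * π)⁻¹
  simp_rw [fderiv_bochnerIntegrand_self hψ hadd hzero hp, intervalIntegral.integral_const,
    sub_zero, smul_smul, inv_mul_cancel₀ Real.two_pi_pos.ne', one_smul] at h
  exact h

theorem fderiv_ofReal_mul_I_apply_bochnerMap (hψ : Differentiable ℂ (uncurry ψ))
    (hadd : ∀ s t, ψ (s + t) = ψ s ∘ ψ t) (hper : ψ (2 * π * I) = id) (hp : ∀ s, ψ s p = p)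
    (t : ℝ) (x : E) :
    fderiv ℂ (ψ (t * I)) p (bochnerMap ψ p x) = bochnerMap ψ p (ψ (t * I) x) := by
  have hcomm := (fderiv ℂ (ψ (t * I)) p).intervalIntegral_comp_comm
    (((continuous_bochnerIntegrand hψ p).uncurry_left x).intervalIntegrable
      (μ := MeasureTheory.volume) 0 (2 * π))
  have hrot := (bochnerIntegrand_periodic hadd hper p (ψ (t * I) x)).intervalIntegral_add_eq
    (0 - t) 0
  rw [zero_add, sub_add_comm, add_zero] at hrot
  rw [bochnerMap, bochnerMap, ContinuousLinearMap.map_smul_of_tower, ← hcomm]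
  simp_rw [fderiv_apply_bochnerIntegrand hψ hadd hp]
  rw [intervalIntegral.integral_comp_sub_right, hrot]

theorem fderiv_apply_bochnerMap (hψ : Differentiable ℂ (uncurry ψ))
    (hadd : ∀ s t, ψ (s + t) = ψ s ∘ ψ t) (hper : ψ (2 * π * I) = id) (hp : ∀ s, ψ s p = p)
    (s : ℂ) (x : E) :
    fderiv ℂ (ψ s) p (bochnerMap ψ p x) = bochnerMap ψ p (ψ s x) := by
  have hlhs : AnalyticOnNhd ℂ (fun s ↦ fderiv ℂ (ψ s) p (bochnerMap ψ p x)) univ := fun s _ ↦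
    (differentiable_fderiv_apply_of_differentiable_uncurry hψ p _).analyticAt s
  have hrhs : AnalyticOnNhd ℂ (fun s ↦ bochnerMap ψ p (ψ s x)) univ := fun s _ ↦
    ((differentiable_bochnerMap hψ).comp (hψ.uncurry_right x)).analyticAt s
  refine congrFun (hlhs.eq_of_frequently_eq (z₀ := 0) hrhs ?_) s
  exact frequently_nhdsNE_zero_of_forall_ofReal_mul_I fun t ↦
    fderiv_ofReal_mul_I_apply_bochnerMap hψ hadd hper hp t x

end HolomorphicFlow

open HolomorphicFlow

/-- **Lemma 2.1.** Let `φ` be a holomorphic `ℂ*`-action on `ℂⁿ` fixing `p`, and let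
`ψ_pᶻ = D(φᶻ)(p)` be the linearized action of `φ` at `p`. Then there is a holomorphic
map `F_p : ℂⁿ → ℂⁿ` such that (i) `ψ_pᶻ ∘ F_p = F_p ∘ φᶻ` for all `z ∈ ℂ*`, and
(ii) `F_p p = 0` and `D F_p (p) = Id`. -/
theorem bochner_local_semiconjugation
    {n : ℕ} (φ : ℂ → EuclideanSpace ℂ (Fin n) → EuclideanSpace ℂ (Fin n))
    (p : EuclideanSpace ℂ (Fin n))
    (hφ_hol : DifferentiableOn ℂ
      (fun q : ℂ × EuclideanSpace ℂ (Fin n) => φ q.1 q.2)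
      ({z : ℂ | z ≠ 0} ×ˢ (Set.univ : Set (EuclideanSpace ℂ (Fin n)))))
    (hφ_one : φ 1 = id)
    (hφ_mul : ∀ z w : ℂ, z ≠ 0 → w ≠ 0 → φ (z * w) = φ z ∘ φ w)
    (hp : ∀ z : ℂ, z ≠ 0 → φ z p = p) :
    ∃ F : EuclideanSpace ℂ (Fin n) → EuclideanSpace ℂ (Fin n),
      Differentiable ℂ F ∧
      (∀ z : ℂ, z ≠ 0 → ∀ x, fderiv ℂ (φ z) p (F x) = F (φ z x)) ∧
      F p = 0 ∧
      fderiv ℂ F p = ContinuousLinearMap.id ℂ (EuclideanSpace ℂ (Fin n)) := by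
  set ψ : ℂ → EuclideanSpace ℂ (Fin n) → EuclideanSpace ℂ (Fin n) := fun s ↦ φ (exp s)
  have hψ : Differentiable ℂ (uncurry ψ) := fun q ↦
    DifferentiableAt.comp (g := fun q : ℂ × EuclideanSpace ℂ (Fin n) ↦ φ q.1 q.2)
      (f := fun q : ℂ × EuclideanSpace ℂ (Fin n) ↦ (exp q.1, q.2)) q
      (hφ_hol.differentiableAt ((isOpen_ne.prod isOpen_univ).mem_nhds ⟨exp_ne_zero q.1, trivial⟩))
      ((differentiable_exp.comp differentiable_fst q).prodMk differentiableAt_snd)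
  have hadd (s t : ℂ) : ψ (s + t) = ψ s ∘ ψ t := by
    simp only [ψ, exp_add, hφ_mul _ _ (exp_ne_zero s) (exp_ne_zero t)]
  have hzero : ψ 0 = id := by simp [ψ, hφ_one]
  have hper : ψ (2 * π * I) = id := by simp [ψ, hφ_one]
  have hfix (s : ℂ) : ψ s p = p := hp _ (exp_ne_zero s)
  refine ⟨bochnerMap ψ p, differentiable_bochnerMap hψ, fun z hz x ↦ ?_, bochnerMap_self hfix,
    (hasFDerivAt_bochnerMap_self hψ hadd hzero hfix).fderiv⟩
  simpa only [ψ, exp_log hz] using fderiv_apply_bochnerMap hψ hadd hper hfix (log z) x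
end

section
/- Let A be a ℂ-linear endomorphism of ℂⁿ such that exp(2πi·A) is the identity map. Then A is diagonalizable (ℂⁿ admits a basis consisting of eigenvectors of A) and every eigenvalue of A is an integer. -/
/-!
If `A v = μ v` then `exp (2πi A) v = e^{2πiμ} v`, so `e^{2πiμ} = 1` and `μ ∈ ℤ`.
If only `(A - μ)² v = 0`, split `2πi A` into the commuting summands `2πiμ` and `2πi N`,
where `N = A - μ`; then `exp (2πi A) v = e^{2πiμ} (v + 2πi N v)`. When `N v ≠ 0` it is an
eigenvector, so `e^{2πiμ} = 1` and the identity `v = v + 2πi N v` forces `N v = 0` after all. Hence every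
generalized eigenspace of `A` is an eigenspace, and over `ℂ` the generalized eigenspaces span.
-/

open Complex
open scoped Real

namespace Module.End

variable {R M : Type*} [CommRing R] [AddCommGroup M] [Module R M]

theorem ker_pow_le_ker_of_ker_sq_le {g : End R M} (h : LinearMap.ker (g ^ 2) ≤ LinearMap.ker g) :
    ∀ k : ℕ, LinearMap.ker (g ^ k) ≤ LinearMap.ker g
  | 0 => by rw [pow_zero, one_eq_id, LinearMap.ker_id]; exact bot_le
  | k + 1 => fun x hx => by
    have hgx : g x ∈ LinearMap.ker g :=
      ker_pow_le_ker_of_ker_sq_le h k (by simpa [pow_succ] using hx)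
    exact h (by simpa [sq] using hgx)

theorem maxGenEigenspace_eq_eigenspace_of_genEigenspace_two_le {f : End R M} {μ : R}
    (h : f.genEigenspace μ 2 ≤ f.eigenspace μ) : f.maxGenEigenspace μ = f.eigenspace μ := by
  refine le_antisymm (fun x hx => ?_) eigenspace_le_maxGenEigenspace
  obtain ⟨k, hk⟩ := (mem_maxGenEigenspace f μ x).mp hx
  rw [← Nat.cast_two, genEigenspace_nat, eigenspace_def] at h
  rw [eigenspace_def]
  exact ker_pow_le_ker_of_ker_sq_le h k hk

theorem exists_basis_of_iSup_eigenspace_eq_top {K V : Type*} [Field K] [AddCommGroup V]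
    [Module K V] [FiniteDimensional K V] {n : ℕ} (hn : Module.finrank K V = n) {f : End K V}
    (hf : ⨆ μ, f.eigenspace μ = ⊤) :
    ∃ b : Basis (Fin n) K V, ∀ i, ∃ μ : K, f (b i) = μ • b i := by
  set s : Set V := {v | ∃ μ : K, f v = μ • v}
  have hs : ⊤ ≤ Submodule.span K s := hf ▸ iSup_le fun μ v hv =>
    Submodule.subset_span ⟨μ, mem_eigenspace_iff.mp hv⟩
  let b := Basis.ofSpan hs
  refine ⟨b.reindex (b.indexEquiv (finBasisOfFinrankEq K V hn)), fun i => ?_⟩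
  rw [Basis.reindex_apply]
  exact Basis.ofSpan_subset hs ⟨_, rfl⟩

end Module.End

section
variable {𝕂 E : Type*} [RCLike 𝕂] [NormedAddCommGroup E] [NormedSpace 𝕂 E] [CompleteSpace E]

theorem exp_apply_of_apply_apply_eq_zero {N : E →L[𝕂] E} {v : E} (h : N (N v) = 0) :
    NormedSpace.exp N v = v + N v := by
  have hpow : ∀ k, (N ^ (k + 2)) v = 0 := fun k => by
    rw [pow_add, mul_apply_eq_comp, sq, mul_apply_eq_comp, h, map_zero]
  have hsum := (NormedSpace.exp_series_hasSum_exp' (𝕂 := 𝕂) N).mapL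
    (ContinuousLinearMap.apply 𝕂 E v)
  have hfin : HasSum (fun k : ℕ => (((k.factorial : 𝕂))⁻¹ • N ^ k) v) (v + N v) := by
    rw [show v + N v = ∑ k ∈ Finset.range 2, (((k.factorial : 𝕂))⁻¹ • N ^ k) v by
      simp [Finset.sum_range_succ]]
    refine hasSum_sum_of_ne_finset_zero fun k hk => ?_
    obtain ⟨k, rfl⟩ : ∃ j, k = j + 2 := ⟨k - 2, by simp at hk; omega⟩
    simp [hpow]
  exact hsum.unique hfin

theorem exp_apply_of_sub_smul_one_apply_apply_eq_zero {B : E →L[𝕂] E} {μ : 𝕂} {v : E}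
    (h : (B - μ • 1) ((B - μ • 1) v) = 0) :
    NormedSpace.exp B v = NormedSpace.exp μ • (v + (B - μ • 1) v) := by
  set N := B - μ • 1
  have hB : B = algebraMap 𝕂 _ μ + N := by
    rw [Algebra.algebraMap_eq_smul_one, add_sub_cancel]
  have hball (x : E →L[𝕂] E) :
      x ∈ Metric.eball 0 (NormedSpace.expSeries 𝕂 (E →L[𝕂] E)).radius :=
    (NormedSpace.expSeries_radius_eq_top 𝕂 (E →L[𝕂] E)).symm ▸ edist_lt_top _ _
  rw [hB, NormedSpace.exp_add_of_commute_of_mem_ball (Algebra.commute_algebraMap_left μ N)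
    (hball _) (hball _), ← NormedSpace.algebraMap_exp_comm, mul_apply_eq_comp,
    exp_apply_of_apply_apply_eq_zero h]
  rfl

end

section
variable {E : Type*} [NormedAddCommGroup E] [NormedSpace ℂ E] [CompleteSpace E]
  {A : E →L[ℂ] E}

theorem exp_two_pi_I_mul_eq_one_of_apply_eq_smul
    (hA : NormedSpace.exp ((2 * π * I : ℂ) • A) = 1) {μ : ℂ} {v : E} (hv : v ≠ 0)
    (h : A v = μ • v) : Complex.exp (2 * π * I * μ) = 1 := by
  have hv' : ((2 * π * I : ℂ) • A - (2 * π * I * μ) • 1) v = 0 := by simp [h, smul_smul]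
  have := exp_apply_of_sub_smul_one_apply_apply_eq_zero (by rw [hv', map_zero])
  rw [hA, hv', add_zero, one_apply_eq_self, ← Complex.exp_eq_exp_ℂ] at this
  exact smul_left_injective ℂ hv (by simpa using this.symm)

theorem exists_int_eq_of_apply_eq_smul
    (hA : NormedSpace.exp ((2 * π * I : ℂ) • A) = 1) {μ : ℂ} {v : E} (hv : v ≠ 0)
    (h : A v = μ • v) : ∃ k : ℤ, μ = k := by
  obtain ⟨k, hk⟩ := Complex.exp_eq_one_iff.mp (exp_two_pi_I_mul_eq_one_of_apply_eq_smul hA hv h)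
  exact ⟨k, mul_left_cancel₀ two_pi_I_ne_zero (by rw [hk, mul_comm])⟩

theorem genEigenspace_two_le_eigenspace_of_exp_two_pi_I_smul_eq_one
    (hA : NormedSpace.exp ((2 * π * I : ℂ) • A) = 1) (μ : ℂ) :
    Module.End.genEigenspace (A : E →ₗ[ℂ] E) μ 2 ≤ Module.End.eigenspace (A : E →ₗ[ℂ] E) μ := by
  intro v hv
  set N : E →L[ℂ] E := A - μ • 1
  have hNN : N (N v) = 0 := by
    rw [← Nat.cast_two, Module.End.mem_genEigenspace_nat, LinearMap.mem_ker] at hv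
    simpa [N, sq] using hv
  suffices hNv : N v = 0 by simpa [N, sub_eq_zero] using hNv
  by_contra hNv
  have hμ := exp_two_pi_I_mul_eq_one_of_apply_eq_smul hA hNv
    (by simpa [N, sub_eq_zero] using hNN)
  set c : ℂ := 2 * π * I
  have hB : c • A - (c * μ) • (1 : E →L[ℂ] E) = c • N := by rw [smul_sub, smul_smul]
  have hexp := exp_apply_of_sub_smul_one_apply_apply_eq_zero (v := v) (by rw [hB]; simp [hNN])
  rw [hA, hB, one_apply_eq_self, ← Complex.exp_eq_exp_ℂ, hμ, one_smul,
    smul_apply, left_eq_add, smul_eq_zero] at hexp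
  exact hNv (hexp.resolve_left two_pi_I_ne_zero)

theorem iSup_eigenspace_eq_top_of_exp_two_pi_I_smul_eq_one [FiniteDimensional ℂ E]
    (hA : NormedSpace.exp ((2 * π * I : ℂ) • A) = 1) :
    ⨆ μ, Module.End.eigenspace (A : E →ₗ[ℂ] E) μ = ⊤ := by
  simpa only [Module.End.maxGenEigenspace_eq_eigenspace_of_genEigenspace_two_le
    (genEigenspace_two_le_eigenspace_of_exp_two_pi_I_smul_eq_one hA _)] using
    Module.End.iSup_maxGenEigenspace_eq_top (A : Module.End ℂ E)

end

/-- Let `A` be a `ℂ`-linear endomorphism of `ℂⁿ` such that `exp(2πi A)` is the identity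
map. Then `A` is diagonalizable (`ℂⁿ` admits a basis of eigenvectors of `A`) and every
eigenvalue of `A` is an integer. -/
theorem diagonalizable_of_exp_eq_id
    {n : ℕ} (A : EuclideanSpace ℂ (Fin n) →L[ℂ] EuclideanSpace ℂ (Fin n))
    (hA : NormedSpace.exp (((2 * Real.pi * Complex.I) : ℂ) • A) = 1) :
    (∃ b : Module.Basis (Fin n) ℂ (EuclideanSpace ℂ (Fin n)),
      ∀ j, ∃ μ : ℂ, A (b j) = μ • b j) ∧
    (∀ (μ : ℂ) (v : EuclideanSpace ℂ (Fin n)), v ≠ 0 → A v = μ • v →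
      ∃ k : ℤ, μ = (k : ℂ)) :=
  ⟨Module.End.exists_basis_of_iSup_eigenspace_eq_top finrank_euclideanSpace_fin
      (iSup_eigenspace_eq_top_of_exp_two_pi_I_smul_eq_one hA),
    fun _ _ hv h => exists_int_eq_of_apply_eq_smul hA hv h⟩
end

section
/- (Lemma 3.2) Let G be a group acting by biholomorphisms on complex manifolds M and N via actions φ and ψ with fixed points p ∈ M and q ∈ N. If φ ≃_{pq} ψ by F_D : U → V, then φ ∼_{pq} ψ by F : U → V. Moreover, the relation ≃ is symmetric: if φ ≃_{pq} ψ by F_D : U → V, then ψ ≃_{qp} φ by (F⁻¹)_E : V → U, where E = F(D). -/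
open scoped Manifold
section AnalyticManifoldDef
open Set
variable {𝕜 : Type*} [NontriviallyNormedField 𝕜] {E : Type*} [NormedAddCommGroup E]
  [NormedSpace 𝕜 E] {H : Type*} [TopologicalSpace H] (I : ModelWithCorners 𝕜 E H)

def analyticPregroupoid : Pregroupoid H where
  property f s := AnalyticOn 𝕜 (I ∘ f ∘ I.symm) (I.symm ⁻¹' s ∩ range I)
  comp {f g u v} hf hg _ _ _ := by
    have : I ∘ (g ∘ f) ∘ I.symm = (I ∘ g ∘ I.symm) ∘ I ∘ f ∘ I.symm := by ext x; simp
    simp only [this]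
    apply hg.comp
    · exact hf.mono fun _ ⟨hx1, hx2⟩ ↦ ⟨hx1.1, hx2⟩
    · intro x ⟨hx1, _⟩
      simpa only [mfld_simps] using hx1.2
  id_mem := by
    apply analyticOn_id.congr
    intro x hx
    simp only [Function.comp_apply, id_eq]
    exact (I.right_inv hx.2)
  locality {f u} _ H := by
    apply analyticOn_of_locally_analyticOn
    intro y ⟨hy1, hy2⟩
    rcases H (I.symm y) hy1 with ⟨v, v_open, yv, hv⟩
    have : I.symm ⁻¹' (u ∩ v) ∩ range I = I.symm ⁻¹' u ∩ range I ∩ I.symm ⁻¹' v := by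
      ext; simp only [mem_inter_iff, mem_preimage]; tauto
    exact ⟨I.symm ⁻¹' v, v_open.preimage I.continuous_symm, by simpa, this ▸ hv⟩
  congr {f g u} _ fg hf := by
    apply hf.congr
    intro y ⟨hy1, _⟩
    simp only [Function.comp_apply] at hy1 ⊢
    rw [fg _ hy1]

def analyticGroupoid : StructureGroupoid H :=
  (analyticPregroupoid I).groupoid

class AnalyticManifold (M : Type*) [TopologicalSpace M] [ChartedSpace H M] : Prop
    extends HasGroupoid M (analyticGroupoid I)
end AnalyticManifoldDef

/-! Both claims are checked one group element `g` at a time. In the first alternative of `≃`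
the set `D` itself witnesses `∼`; in the second, `U ∩ (φ g)⁻¹' U` does, and it contains `p`.
For the symmetry, the first alternative for `(φ g, D)` is carried by `F` to the first one for
`(ψ g, F '' D)`. In the second alternative every `y` with `ψ g y ∈ V` is `F u'` for some
`u' ∈ U` with `φ g u' = F' (ψ g y)`; this is where injectivity of `ψ g` enters. -/

section Intertwining
open Set Function

variable {M N : Type*}

/-- The condition of `φ ∼_{pq} ψ by F : U → V` for a single group element. -/
def SimRel [TopologicalSpace M] (f : M → M) (f' : N → N) (F : M → N) (U : Set M) : Prop :=
  ∃ W : Set M, IsOpen W ∧ W.Nonempty ∧ W ⊆ U ∩ f ⁻¹' U ∧ EqOn (f' ∘ F) (F ∘ f) W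

/-- The condition of `φ ≃_{pq} ψ by F_D : U → V` for a single group element. -/
def SimeqRel (f : M → M) (f' : N → N) (F : M → N) (U D : Set M) : Prop :=
  (f '' D ⊆ U ∧ EqOn (f' ∘ F) (F ∘ f) D) ∨ (U ⊆ f '' U ∧ EqOn (f' ∘ F) (F ∘ f) (f ⁻¹' U))

variable {f : M → M} {f' : N → N} {F : M → N} {F' : N → M} {U D : Set M} {V : Set N}

theorem SimeqRel.simRel [TopologicalSpace M] (h : SimeqRel f f' F U D) (hf : Continuous f)
    (hU : IsOpen U) (hD : IsOpen D) (hDU : D ⊆ U) {p : M} (hp : f p = p) (hpD : p ∈ D) :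
    SimRel f f' F U := by
  rcases h with ⟨hfD, hEq⟩ | ⟨-, hEq⟩
  · exact ⟨D, hD, ⟨p, hpD⟩, fun x hx ↦ ⟨hDU hx, hfD (mem_image_of_mem f hx)⟩, hEq⟩
  · refine ⟨U ∩ f ⁻¹' U, hU.inter (hU.preimage hf), ⟨p, hDU hpD, ?_⟩, subset_rfl,
      hEq.mono inter_subset_right⟩
    simpa only [mem_preimage, hp] using hDU hpD

theorem symm_of_image_subset (hfD : f '' D ⊆ U) (hEq : EqOn (f' ∘ F) (F ∘ f) D)
    (hF : MapsTo F U V) (hF'F : LeftInvOn F' F U) (hDU : D ⊆ U) :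
    f' '' (F '' D) ⊆ V ∧ EqOn (f ∘ F') (F' ∘ f') (F '' D) := by
  have hfx : ∀ x ∈ D, f x ∈ U := fun x hx ↦ hfD (mem_image_of_mem f hx)
  constructor
  · rintro _ ⟨_, ⟨x, hx, rfl⟩, rfl⟩
    rw [show f' (F x) = F (f x) from hEq hx]
    exact hF (hfx x hx)
  · rintro _ ⟨x, hx, rfl⟩
    calc f (F' (F x)) = f x := by rw [hF'F (hDU hx)]
      _ = F' (F (f x)) := (hF'F (hfx x hx)).symm
      _ = F' (f' (F x)) := congrArg F' (hEq hx).symm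

theorem symm_of_subset_image (hUf : U ⊆ f '' U) (hEq : EqOn (f' ∘ F) (F ∘ f) (f ⁻¹' U))
    (hF : BijOn F U V) (hF'F : LeftInvOn F' F U) (hf' : Injective f') :
    V ⊆ f' '' V ∧ EqOn (f ∘ F') (F' ∘ f') (f' ⁻¹' V) := by
  have lift : ∀ y ∈ V, ∃ u' ∈ U, f u' ∈ U ∧ f' (F u') = y ∧ F' y = f u' := by
    intro y hy
    obtain ⟨u, hu, rfl⟩ := hF.surjOn hy
    obtain ⟨u', hu', rfl⟩ := hUf hu
    exact ⟨u', hu', hu, hEq hu, hF'F hu⟩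
  constructor
  · intro y hy
    obtain ⟨u', hu', -, hFu', -⟩ := lift y hy
    exact ⟨F u', hF.mapsTo hu', hFu'⟩
  · intro y hy
    obtain ⟨u', hu', -, hFu', hF'y⟩ := lift (f' y) hy
    obtain rfl : F u' = y := hf' hFu'
    exact (congrArg f (hF'F hu')).trans hF'y.symm

theorem SimeqRel.symm (h : SimeqRel f f' F U D) (hF : BijOn F U V) (hF'F : LeftInvOn F' F U)
    (hf' : Injective f') (hDU : D ⊆ U) : SimeqRel f' f F' V (F '' D) := by
  rcases h with ⟨hfD, hEq⟩ | ⟨hUf, hEq⟩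
  · exact Or.inl (symm_of_image_subset hfD hEq hF.mapsTo hF'F hDU)
  · exact Or.inr (symm_of_subset_image hUf hEq hF hF'F hf')

theorem injective_of_map_one_of_map_mul {G X : Type*} [Group G] {act : G → X → X}
    (h_one : act 1 = id) (h_mul : ∀ g h : G, act (g * h) = act g ∘ act h) (g : G) :
    Injective (act g) :=
  LeftInverse.injective (g := act g⁻¹) fun x ↦ by
    rw [← comp_apply (f := act g⁻¹), ← h_mul, inv_mul_cancel, h_one, id]

end Intertwining

theorem simeq_rel_implies_sim_and_symm_general
    {E : Type*} [NormedAddCommGroup E] [NormedSpace ℂ E]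
    {M : Type*} [TopologicalSpace M] [ChartedSpace E M]
    {E' : Type*} [NormedAddCommGroup E'] [NormedSpace ℂ E']
    {N : Type*} [TopologicalSpace N] [ChartedSpace E' N]
    {G : Type*} [Group G]
    (φ : G → M → M) (ψ : G → N → N)
    (hφ_hol : ∀ g : G, MDifferentiable 𝓘(ℂ, E) 𝓘(ℂ, E) (φ g))
    (hψ_one : ψ 1 = id) (hψ_mul : ∀ g h : G, ψ (g * h) = ψ g ∘ ψ h)
    (p : M) (hp : ∀ g : G, φ g p = p)
    (U : Set M) (hU : IsOpen U)
    (V : Set N)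
    (F : M → N) (F' : N → M)
    (hF_bij : Set.BijOn F U V)
    (hF'F : ∀ x ∈ U, F' (F x) = x)
    (D : Set M) (hD : IsOpen D) (hpD : p ∈ D) (hDcl : closure D ⊆ U)
    -- `φ ≃_{pq} ψ` by `F_D : U → V`:
    (hsimeq : ∀ g : G,
      (φ g '' D ⊆ U ∧ ∀ x ∈ D, ψ g (F x) = F (φ g x)) ∨
      (U ⊆ φ g '' U ∧ ∀ x ∈ (φ g) ⁻¹' U, ψ g (F x) = F (φ g x))) :
    -- `φ ∼_{pq} ψ` by `F : U → V` ...
    (∀ g : G, ∃ W : Set M, IsOpen W ∧ W.Nonempty ∧ W ⊆ U ∩ (φ g) ⁻¹' U ∧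
      ∀ x ∈ W, ψ g (F x) = F (φ g x)) ∧
    -- ... and `ψ ≃_{qp} φ` by `(F⁻¹)_E : V → U` with `E = F(D)`:
    (∀ g : G,
      (ψ g '' (F '' D) ⊆ V ∧ ∀ y ∈ F '' D, φ g (F' y) = F' (ψ g y)) ∨
      (V ⊆ ψ g '' V ∧ ∀ y ∈ (ψ g) ⁻¹' V, φ g (F' y) = F' (ψ g y))) := by
  have hDU : D ⊆ U := subset_closure.trans hDcl
  have hsimeq' : ∀ g, SimeqRel (φ g) (ψ g) F U D := hsimeq
  refine ⟨fun g ↦ ?_, fun g ↦ ?_⟩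
  · exact (hsimeq' g).simRel (hφ_hol g).continuous hU hD hDU (hp g) hpD
  · exact (hsimeq' g).symm hF_bij hF'F (injective_of_map_one_of_map_mul hψ_one hψ_mul g) hDU

/-- **Lemma 3.2.** Let `G` be a group acting by biholomorphisms on complex manifolds
`M` and `N` via actions `φ` and `ψ`, with fixed points `p ∈ M` and `q ∈ N`. If
`φ ≃_{pq} ψ` by `F_D : U → V`, then `φ ∼_{pq} ψ` by `F : U → V`. Moreover the relation
`≃` is symmetric: if `φ ≃_{pq} ψ` by `F_D : U → V`, then `ψ ≃_{qp} φ` by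
`(F⁻¹)_E : V → U` where `E = F(D)`. -/
theorem simeq_rel_implies_sim_and_symm
    {E : Type*} [NormedAddCommGroup E] [NormedSpace ℂ E]
    {M : Type*} [TopologicalSpace M] [ChartedSpace E M] [AnalyticManifold 𝓘(ℂ, E) M]
    {E' : Type*} [NormedAddCommGroup E'] [NormedSpace ℂ E']
    {N : Type*} [TopologicalSpace N] [ChartedSpace E' N] [AnalyticManifold 𝓘(ℂ, E') N]
    {G : Type*} [Group G]
    (φ : G → M → M) (ψ : G → N → N)
    (hφ_one : φ 1 = id) (hφ_mul : ∀ g h : G, φ (g * h) = φ g ∘ φ h)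
    (hφ_hol : ∀ g : G, MDifferentiable 𝓘(ℂ, E) 𝓘(ℂ, E) (φ g))
    (hψ_one : ψ 1 = id) (hψ_mul : ∀ g h : G, ψ (g * h) = ψ g ∘ ψ h)
    (hψ_hol : ∀ g : G, MDifferentiable 𝓘(ℂ, E') 𝓘(ℂ, E') (ψ g))
    (p : M) (hp : ∀ g : G, φ g p = p)
    (q : N) (hq : ∀ g : G, ψ g q = q)
    (U : Set M) (hU : IsOpen U) (hUconn : IsConnected U) (hpU : p ∈ U)
    (V : Set N) (hV : IsOpen V) (hVconn : IsConnected V) (hqV : q ∈ V)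
    (F : M → N) (F' : N → M)
    (hF_bij : Set.BijOn F U V) (hFp : F p = q)
    (hF_hol : MDifferentiableOn 𝓘(ℂ, E) 𝓘(ℂ, E') F U)
    (hF'_hol : MDifferentiableOn 𝓘(ℂ, E') 𝓘(ℂ, E) F' V)
    (hF'F : ∀ x ∈ U, F' (F x) = x) (hFF' : ∀ y ∈ V, F (F' y) = y)
    (D : Set M) (hD : IsOpen D) (hpD : p ∈ D) (hDcl : closure D ⊆ U)
    -- `φ ≃_{pq} ψ` by `F_D : U → V`:
    (hsimeq : ∀ g : G,
      (φ g '' D ⊆ U ∧ ∀ x ∈ D, ψ g (F x) = F (φ g x)) ∨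
      (U ⊆ φ g '' U ∧ ∀ x ∈ (φ g) ⁻¹' U, ψ g (F x) = F (φ g x))) :
    -- `φ ∼_{pq} ψ` by `F : U → V` ...
    (∀ g : G, ∃ W : Set M, IsOpen W ∧ W.Nonempty ∧ W ⊆ U ∩ (φ g) ⁻¹' U ∧
      ∀ x ∈ W, ψ g (F x) = F (φ g x)) ∧
    -- ... and `ψ ≃_{qp} φ` by `(F⁻¹)_E : V → U` with `E = F(D)`:
    (∀ g : G,
      (ψ g '' (F '' D) ⊆ V ∧ ∀ y ∈ F '' D, φ g (F' y) = F' (ψ g y)) ∨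
      (V ⊆ ψ g '' V ∧ ∀ y ∈ (ψ g) ⁻¹' V, φ g (F' y) = F' (ψ g y))) :=
  simeq_rel_implies_sim_and_symm_general (E' := E') φ ψ hφ_hol hψ_one hψ_mul p hp U hU V F F' hF_bij
    hF'F D hD hpD hDcl hsimeq
end

section
/- (Lemma 3.4) Let G be a group acting by biholomorphisms on complex manifolds M and N via actions φ and ψ with fixed points p ∈ M and q ∈ N. If φ ≃_{pq} ψ by F_D : U → V, then there is a biholomorphism T : Sat(D,φ) → Sat(F(D),ψ) between the saturations that extends F restricted to D and satisfies ψ^g ∘ T = T ∘ φ^g on Sat(D,φ) for every g ∈ G. -/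
/-!
Every point `x` of `Sat(D, φ)` is moved into `D` by some `g`, and one sets
`T x = ψ(g⁻¹) (F (φ(g) x))`. The conjugacy condition makes `F` equivariant wherever both `x`
and `φ(g) x` lie in `D`, which is exactly what makes `T` independent of the choice of `g`. The
inverse is built in the same way from `F'` on `F(D)`, and holomorphy is local because `T`
agrees with `ψ(g⁻¹) ∘ F ∘ φ(g)` on the open set `φ(g)⁻¹(D)`.
-/

open scoped Manifold Topology
open Set

section EquivariantExtension

variable {G M N : Type*} [Group G] [MulAction G M] [MulAction G N]

variable (G) in
def saturation (D : Set M) : Set M := {x | ∃ g : G, g • x ∈ D}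

variable (G) in
def EquivariantOn (F : M → N) (D : Set M) : Prop :=
  ∀ (g : G) (x : M), x ∈ D → g • x ∈ D → g • F x = F (g • x)

variable (G) in
/-- The value `F x` off the saturation is junk. -/
noncomputable def equivariantExtension (F : M → N) (D : Set M) (x : M) : N :=
  open Classical in
  if h : ∃ g : G, g • x ∈ D then h.choose⁻¹ • F (h.choose • x) else F x

variable {F : M → N} {D : Set M} {g : G} {x : M}

theorem equivariantExtension_eq (hF : EquivariantOn G F D) (hg : g • x ∈ D) :
    equivariantExtension G F D x = g⁻¹ • F (g • x) := by
  have hx : ∃ k : G, k • x ∈ D := ⟨g, hg⟩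
  set k := hx.choose
  have hk : k • x ∈ D := hx.choose_spec
  have hgk : (g * k⁻¹) • F (k • x) = F (g • x) := by
    rw [hF _ _ hk (by rwa [smul_smul, inv_mul_cancel_right]), smul_smul, inv_mul_cancel_right]
  rw [equivariantExtension, dif_pos hx, ← hgk, smul_smul, inv_mul_cancel_left]

theorem smul_equivariantExtension_of_smul_mem (hF : EquivariantOn G F D) (hg : g • x ∈ D) :
    g • equivariantExtension G F D x = F (g • x) := by
  rw [equivariantExtension_eq hF hg, smul_inv_smul]

theorem equivariantExtension_eq_self (hF : EquivariantOn G F D) (hx : x ∈ D) :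
    equivariantExtension G F D x = F x := by
  simpa using smul_equivariantExtension_of_smul_mem (g := (1 : G)) hF (by simpa using hx)

theorem smul_equivariantExtension (hF : EquivariantOn G F D) (hx : x ∈ saturation G D) (g : G) :
    g • equivariantExtension G F D x = equivariantExtension G F D (g • x) := by
  obtain ⟨h, hh⟩ := hx
  have hgx : (h * g⁻¹) • g • x ∈ D := by rwa [smul_smul, inv_mul_cancel_right]
  rw [equivariantExtension_eq hF hh, equivariantExtension_eq hF hgx, smul_smul, smul_smul,
    inv_mul_cancel_right, mul_inv_rev, inv_inv]

theorem mapsTo_equivariantExtension (hF : EquivariantOn G F D) :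
    MapsTo (equivariantExtension G F D) (saturation G D) (saturation G (F '' D)) := by
  rintro x ⟨g, hg⟩
  exact ⟨g, smul_equivariantExtension_of_smul_mem hF hg ▸ mem_image_of_mem F hg⟩

theorem leftInvOn_equivariantExtension {F' : N → M} (hF : EquivariantOn G F D)
    (hF' : EquivariantOn G F' (F '' D)) (hinv : LeftInvOn F' F D) :
    LeftInvOn (equivariantExtension G F' (F '' D)) (equivariantExtension G F D)
      (saturation G D) := by
  rintro x ⟨g, hg⟩
  have hTx := smul_equivariantExtension_of_smul_mem hF hg
  rw [equivariantExtension_eq hF' (hTx ▸ mem_image_of_mem F hg), hTx, hinv hg, inv_smul_smul]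

theorem invOn_equivariantExtension {F' : N → M} (hF : EquivariantOn G F D)
    (hF' : EquivariantOn G F' (F '' D)) (hinv : LeftInvOn F' F D) :
    InvOn (equivariantExtension G F' (F '' D)) (equivariantExtension G F D)
      (saturation G D) (saturation G (F '' D)) := by
  refine ⟨leftInvOn_equivariantExtension hF hF' hinv, ?_⟩
  have h := leftInvOn_equivariantExtension hF' (hinv.image_image.symm ▸ hF)
    hinv.rightInvOn_image
  rwa [hinv.image_image] at h

end EquivariantExtension

section Holomorphy

variable {𝕜 : Type*} [NontriviallyNormedField 𝕜]
  {E : Type*} [NormedAddCommGroup E] [NormedSpace 𝕜 E]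
  {H : Type*} [TopologicalSpace H] {I : ModelWithCorners 𝕜 E H}
  {M : Type*} [TopologicalSpace M] [ChartedSpace H M]
  {E' : Type*} [NormedAddCommGroup E'] [NormedSpace 𝕜 E']
  {H' : Type*} [TopologicalSpace H'] {I' : ModelWithCorners 𝕜 E' H'}
  {N : Type*} [TopologicalSpace N] [ChartedSpace H' N]
  {G : Type*} [Group G] [MulAction G M] [MulAction G N]

theorem mdifferentiableOn_equivariantExtension {F : M → N} {D : Set M}
    (hF : EquivariantOn G F D) (hD : IsOpen D) (hFD : MDifferentiableOn I I' F D)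
    (hM : ∀ g : G, MDifferentiable I I (fun x : M => g • x))
    (hN : ∀ g : G, MDifferentiable I' I' (fun y : N => g • y)) :
    MDifferentiableOn I I' (equivariantExtension G F D) (saturation G D) := by
  rintro x ⟨g, hg⟩
  have hloc : equivariantExtension G F D =ᶠ[𝓝 x] fun z => g⁻¹ • F (g • z) :=
    Filter.eventually_of_mem ((hD.preimage (hM g).continuous).mem_nhds hg)
      fun z hz => equivariantExtension_eq hF hz
  have hFgx : MDifferentiableAt I I' F (g • x) := (hFD _ hg).mdifferentiableAt (hD.mem_nhds hg)
  exact (((hN g⁻¹ _).comp x (hFgx.comp x (hM g x))).congr_of_eventuallyEq hloc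
    ).mdifferentiableWithinAt

end Holomorphy

section LocalConjugacy

variable {G M N : Type*} [Group G] [MulAction G M] [MulAction G N]

variable (G) in
/-- The relation `φ ≃_{pq} ψ` by `F_D : U → V`, without the conditions on `p`, `q` and `F`. -/
def IsLocalConjugacy (F : M → N) (U D : Set M) : Prop :=
  ∀ g : G,
    ((fun x => g • x) '' D ⊆ U ∧ ∀ x ∈ D, g • F x = F (g • x)) ∨
    (U ⊆ (fun x => g • x) '' U ∧
      ∀ x ∈ (fun x => g • x) ⁻¹' U, g • F x = F (g • x))

variable {F : M → N} {F' : N → M} {U D : Set M}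

theorem IsLocalConjugacy.equivariantOn (h : IsLocalConjugacy G F U D) (hDU : D ⊆ U) :
    EquivariantOn G F D := by
  intro g x hx hgx
  rcases h g with ⟨-, hcomm⟩ | ⟨-, hcomm⟩
  · exact hcomm x hx
  · exact hcomm x (hDU hgx)

theorem IsLocalConjugacy.equivariantOn_image (h : IsLocalConjugacy G F U D) (hDU : D ⊆ U)
    (hinv : LeftInvOn F' F U) : EquivariantOn G F' (F '' D) := by
  rintro g _ ⟨d, hd, rfl⟩ ⟨d', hd', hgd⟩
  rw [hinv (hDU hd), ← hgd, hinv (hDU hd')]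
  rcases h g with ⟨hsub, hcomm⟩ | ⟨hsup, hcomm⟩
  · exact hinv.injOn (hsub ⟨d, hd, rfl⟩) (hDU hd') (by rw [← hcomm d hd, hgd])
  · obtain ⟨u, hu, rfl⟩ := hsup (hDU hd')
    have hFu : F u = F d := smul_left_cancel g (by rw [hcomm u (hDU hd'), hgd])
    rw [hinv.injOn hu (hDU hd) hFu]

end LocalConjugacy

theorem biholomorphism_between_saturations_general
    {E : Type*} [NormedAddCommGroup E] [NormedSpace ℂ E]
    {M : Type*} [TopologicalSpace M] [ChartedSpace E M]
    {E' : Type*} [NormedAddCommGroup E'] [NormedSpace ℂ E']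
    {N : Type*} [TopologicalSpace N] [ChartedSpace E' N]
    {G : Type*} [Group G]
    (φ : G → M → M) (ψ : G → N → N)
    (hφ_one : φ 1 = id) (hφ_mul : ∀ g h : G, φ (g * h) = φ g ∘ φ h)
    (hφ_hol : ∀ g : G, MDifferentiable 𝓘(ℂ, E) 𝓘(ℂ, E) (φ g))
    (hψ_one : ψ 1 = id) (hψ_mul : ∀ g h : G, ψ (g * h) = ψ g ∘ ψ h)
    (hψ_hol : ∀ g : G, MDifferentiable 𝓘(ℂ, E') 𝓘(ℂ, E') (ψ g))
    (U : Set M)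
    (V : Set N) (hV : IsOpen V)
    (F : M → N) (F' : N → M)
    (hF_bij : Set.BijOn F U V)
    (hF_hol : MDifferentiableOn 𝓘(ℂ, E) 𝓘(ℂ, E') F U)
    (hF'_hol : MDifferentiableOn 𝓘(ℂ, E') 𝓘(ℂ, E) F' V)
    (hF'F : ∀ x ∈ U, F' (F x) = x)
    (D : Set M) (hD : IsOpen D) (hDcl : closure D ⊆ U)
    -- `φ ≃_{pq} ψ` by `F_D : U → V`:
    (hsimeq : ∀ g : G,
      (φ g '' D ⊆ U ∧ ∀ x ∈ D, ψ g (F x) = F (φ g x)) ∨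
      (U ⊆ φ g '' U ∧ ∀ x ∈ (φ g) ⁻¹' U, ψ g (F x) = F (φ g x))) :
    -- there is a biholomorphism `T : Sat(D, φ) → Sat(F(D), ψ)` extending `F|_D`
    -- and conjugating the two actions:
    ∃ T : M → N,
      Set.BijOn T {x : M | ∃ g : G, φ g x ∈ D} {y : N | ∃ g : G, ψ g y ∈ F '' D} ∧
      MDifferentiableOn 𝓘(ℂ, E) 𝓘(ℂ, E') T {x : M | ∃ g : G, φ g x ∈ D} ∧
      (∃ S : N → M,
        MDifferentiableOn 𝓘(ℂ, E') 𝓘(ℂ, E) S {y : N | ∃ g : G, ψ g y ∈ F '' D} ∧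
        (∀ x ∈ {x : M | ∃ g : G, φ g x ∈ D}, S (T x) = x) ∧
        (∀ y ∈ {y : N | ∃ g : G, ψ g y ∈ F '' D}, T (S y) = y)) ∧
      (∀ x ∈ D, T x = F x) ∧
      (∀ g : G, ∀ x ∈ {x : M | ∃ g : G, φ g x ∈ D}, ψ g (T x) = T (φ g x)) := by
  -- with these instances `g • x` unfolds to `φ g x`, so the hypotheses apply as they stand
  let _ : MulAction G M :=
    { smul := φ, one_smul := congrFun hφ_one, mul_smul := fun g h => congrFun (hφ_mul g h) }
  let _ : MulAction G N :=
    { smul := ψ, one_smul := congrFun hψ_one, mul_smul := fun g h => congrFun (hψ_mul g h) }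
  have hDU : D ⊆ U := subset_closure.trans hDcl
  have hinv : LeftInvOn F' F U := hF'F
  have hconj : IsLocalConjugacy G F U D := hsimeq
  have hF : EquivariantOn G F D := hconj.equivariantOn hDU
  have hF' : EquivariantOn G F' (F '' D) := hconj.equivariantOn_image hDU hinv
  have hFDV : F '' D ⊆ V := (image_mono hDU).trans hF_bij.image_eq.subset
  have hFD : IsOpen (F '' D) := by
    rw [← inter_eq_left.2 hDU, hinv.image_inter', hF_bij.image_eq, inter_comm]
    exact hF'_hol.continuousOn.isOpen_inter_preimage hV hD
  have hTS := invOn_equivariantExtension hF hF' (hinv.mono hDU)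
  have hS_maps := mapsTo_equivariantExtension hF'
  rw [(hinv.mono hDU).image_image] at hS_maps
  refine ⟨equivariantExtension G F D, hTS.bijOn (mapsTo_equivariantExtension hF) hS_maps,
    mdifferentiableOn_equivariantExtension hF hD (hF_hol.mono hDU) hφ_hol hψ_hol,
    ⟨equivariantExtension G F' (F '' D),
      mdifferentiableOn_equivariantExtension hF' hFD (hF'_hol.mono hFDV) hψ_hol hφ_hol,
      hTS.1, hTS.2⟩,
    fun x hx => equivariantExtension_eq_self hF hx,
    fun g x hx => smul_equivariantExtension hF hx g⟩

/-- **Lemma 3.4.** Let `G` be a group acting by biholomorphisms on complex manifolds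
`M` and `N` via actions `φ` and `ψ`, with fixed points `p ∈ M` and `q ∈ N`. If
`φ ≃_{pq} ψ` by `F_D : U → V`, then there is a biholomorphism
`T : Sat(D, φ) → Sat(F(D), ψ)` between the saturations that extends `F` restricted to
`D` and satisfies `ψᵍ ∘ T = T ∘ φᵍ` on `Sat(D, φ)` for every `g ∈ G`. -/
theorem biholomorphism_between_saturations
    {E : Type*} [NormedAddCommGroup E] [NormedSpace ℂ E]
    {M : Type*} [TopologicalSpace M] [ChartedSpace E M] [IsManifold 𝓘(ℂ, E) (⊤ : WithTop ℕ∞) M]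
    {E' : Type*} [NormedAddCommGroup E'] [NormedSpace ℂ E']
    {N : Type*} [TopologicalSpace N] [ChartedSpace E' N] [IsManifold 𝓘(ℂ, E') (⊤ : WithTop ℕ∞) N]
    {G : Type*} [Group G]
    (φ : G → M → M) (ψ : G → N → N)
    (hφ_one : φ 1 = id) (hφ_mul : ∀ g h : G, φ (g * h) = φ g ∘ φ h)
    (hφ_hol : ∀ g : G, MDifferentiable 𝓘(ℂ, E) 𝓘(ℂ, E) (φ g))
    (hψ_one : ψ 1 = id) (hψ_mul : ∀ g h : G, ψ (g * h) = ψ g ∘ ψ h)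
    (hψ_hol : ∀ g : G, MDifferentiable 𝓘(ℂ, E') 𝓘(ℂ, E') (ψ g))
    (p : M) (hp : ∀ g : G, φ g p = p)
    (q : N) (hq : ∀ g : G, ψ g q = q)
    (U : Set M) (hU : IsOpen U) (hUconn : IsConnected U) (hpU : p ∈ U)
    (V : Set N) (hV : IsOpen V) (hVconn : IsConnected V) (hqV : q ∈ V)
    (F : M → N) (F' : N → M)
    (hF_bij : Set.BijOn F U V) (hFp : F p = q)
    (hF_hol : MDifferentiableOn 𝓘(ℂ, E) 𝓘(ℂ, E') F U)
    (hF'_hol : MDifferentiableOn 𝓘(ℂ, E') 𝓘(ℂ, E) F' V)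
    (hF'F : ∀ x ∈ U, F' (F x) = x) (hFF' : ∀ y ∈ V, F (F' y) = y)
    (D : Set M) (hD : IsOpen D) (hpD : p ∈ D) (hDcl : closure D ⊆ U)
    -- `φ ≃_{pq} ψ` by `F_D : U → V`:
    (hsimeq : ∀ g : G,
      (φ g '' D ⊆ U ∧ ∀ x ∈ D, ψ g (F x) = F (φ g x)) ∨
      (U ⊆ φ g '' U ∧ ∀ x ∈ (φ g) ⁻¹' U, ψ g (F x) = F (φ g x))) :
    -- there is a biholomorphism `T : Sat(D, φ) → Sat(F(D), ψ)` extending `F|_D`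
    -- and conjugating the two actions:
    ∃ T : M → N,
      Set.BijOn T {x : M | ∃ g : G, φ g x ∈ D} {y : N | ∃ g : G, ψ g y ∈ F '' D} ∧
      MDifferentiableOn 𝓘(ℂ, E) 𝓘(ℂ, E') T {x : M | ∃ g : G, φ g x ∈ D} ∧
      (∃ S : N → M,
        MDifferentiableOn 𝓘(ℂ, E') 𝓘(ℂ, E) S {y : N | ∃ g : G, ψ g y ∈ F '' D} ∧
        (∀ x ∈ {x : M | ∃ g : G, φ g x ∈ D}, S (T x) = x) ∧
        (∀ y ∈ {y : N | ∃ g : G, ψ g y ∈ F '' D}, T (S y) = y)) ∧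
      (∀ x ∈ D, T x = F x) ∧
      (∀ g : G, ∀ x ∈ {x : M | ∃ g : G, φ g x ∈ D}, ψ g (T x) = T (φ g x)) :=
  biholomorphism_between_saturations_general φ ψ hφ_one hφ_mul hφ_hol hψ_one hψ_mul hψ_hol U V hV F
    F' hF_bij hF_hol hF'_hol hF'F D hD hDcl hsimeq
end
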